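/- Let A be a closed, densely defined linear operator on a complex Hilbert space H with 0 ∈ ρ(A), and suppose the family (P_n, A_n)_{n∈ℕ} approximates A strongly. If λ ∈ ρ(A) is such that λ ∈ ρ(A_n) for all n ∈ ℕ and sup_n ‖(A_n − λ)⁻¹‖ < ∞, then (A_n − λ)⁻¹ P_n x → (A − λ)⁻¹ x for all x ∈ H. -/

import Mathlib

open Filter Topology Metric

noncomputable section

variable {H : Type*} [NormedAddCommGroup H] [InnerProductSpace ℂ H] [CompleteSpace H]

/-- `R : H →L[ℂ] H` is a (two-sided, everywhere defined) bounded inverse of `A - lam`,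
i.e. `lam` belongs to the resolvent set of `A` with resolvent `R`. -/
def IsResolventAt (A : H →ₗ.[ℂ] H) (lam : ℂ) (R : H →L[ℂ] H) : Prop :=
  (∀ x : A.domain, R (A x - lam • (x : H)) = (x : H)) ∧
  ∀ y : H, ∃ hy : R y ∈ A.domain, A ⟨R y, hy⟩ - lam • R y = y

/-- The resolvent set `ρ(A)` of a (possibly unbounded) operator `A`. -/
def presolventSet (A : H →ₗ.[ℂ] H) : Set ℂ :=
  {lam | ∃ R, IsResolventAt A lam R}

-- The resolvent operator `(A - lam)⁻¹` (with junk value `0` off the resolvent set).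
open scoped Classical in
def resolventOf (A : H →ₗ.[ℂ] H) (lam : ℂ) : H →L[ℂ] H :=
  if h : ∃ R, IsResolventAt A lam R then h.choose else 0

/-- The `ε`-pseudospectrum `σ_ε(A) = {λ : ‖(A-λ)⁻¹‖ > 1/ε}`, where `‖(A-λ)⁻¹‖` is
understood as `∞` for `λ` in the spectrum. -/
def pseudoSpectrum (ε : ℝ) (A : H →ₗ.[ℂ] H) : Set ℂ :=
  {lam | lam ∉ presolventSet A ∨ 1 / ε < ‖resolventOf A lam‖}

/-- The numerical range `W(T) = {⟨T x, x⟩ : ‖x‖ = 1}` of a bounded operator `T`;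
`⟨T x, x⟩` (inner product linear in the first argument) is written as
`inner x (T x)` in the mathlib convention. -/
def numRange (T : H →L[ℂ] H) : Set ℂ :=
  {z | ∃ x : H, ‖x‖ = 1 ∧ z = (inner ℂ x (T x) : ℂ)}

/-- The numerical range of a (possibly unbounded) operator. -/
def pnumRange (A : H →ₗ.[ℂ] H) : Set ℂ :=
  {z | ∃ x : A.domain, ‖(x : H)‖ = 1 ∧ z = (inner ℂ (x : H) (A x) : ℂ)}

/-- The numerical radius of a bounded operator. -/
def nradius (T : H →L[ℂ] H) : ℝ :=
  sSup ((fun z => ‖z‖) '' numRange T)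

/-- The numerical range of a bounded operator on a subspace `U` of `H`. -/
def numRangeSub {U : Submodule ℂ H} (T : U →L[ℂ] U) : Set ℂ :=
  {z | ∃ x : U, ‖(x : H)‖ = 1 ∧ z = (inner ℂ (x : H) ((T x : U) : H) : ℂ)}

/-- `B_δ(U) = {z : dist (z, U) < δ}`, the `δ`-neighborhood of a set `U ⊆ ℂ`. -/
def nbhdSet (δ : ℝ) (U : Set ℂ) : Set ℂ :=
  {z | ∃ u ∈ U, dist z u < δ}

/-- `U⁻¹ = {z⁻¹ : z ∈ U \ {0}}`. -/
def invSet (U : Set ℂ) : Set ℂ :=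
  {z | ∃ u ∈ U, u ≠ 0 ∧ z = u⁻¹}

/-- `U + s = {z + s : z ∈ U}`. -/
def shiftSet (U : Set ℂ) (s : ℂ) : Set ℂ :=
  {z | ∃ u ∈ U, z = u + s}

/-!
Put `y = (A - λ)⁻¹ x`. Then `A y = x + λ y`, so `y = A⁻¹ (x + λ y)` is the limit of
`u_n = A_n⁻¹ P_n (x + λ y)`. Since `(A_n - λ) u_n = P_n x + λ (P_n y - u_n)`,
`(A_n - λ)⁻¹ P_n x = u_n - λ (A_n - λ)⁻¹ (P_n y - u_n)`,
and the last term tends to `0` because `P_n y - u_n → 0` and the inverses are uniformly bounded.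
-/

section Resolvent

variable {E : Type*} [NormedAddCommGroup E] [InnerProductSpace ℂ E]

theorem isResolventAt_resolventOf {A : E →ₗ.[ℂ] E} {lam : ℂ} (h : lam ∈ presolventSet A) :
    IsResolventAt A lam (resolventOf A lam) := by
  rw [resolventOf, dif_pos (show ∃ R, IsResolventAt A lam R from h)]
  exact h.choose_spec

theorem IsResolventAt.apply_add_smul {A : E →ₗ.[ℂ] E} {lam mu : ℂ} {R S : E →L[ℂ] E}
    (hR : IsResolventAt A lam R) (hS : IsResolventAt A mu S) (x : E) :
    S (x + (lam - mu) • R x) = R x := by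
  obtain ⟨hx, hAx⟩ := hR.2 x
  have hshift : A ⟨R x, hx⟩ - mu • R x = x + (lam - mu) • R x := by
    linear_combination (norm := module) hAx
  rw [← hshift]
  exact hS.1 ⟨R x, hx⟩

end Resolvent

theorem LinearMap.apply_eq_sub_smul_apply_sub {K M : Type*} [Ring K] [AddCommGroup M]
    [Module K M] (f : M →ₗ[K] M) {lam : K} {p q u w : M}
    (hf : f (w - lam • u) = u) (hw : w = p + lam • q) :
    f p = u - lam • f (q - u) := by
  rw [hw, add_sub_assoc, ← smul_sub, map_add, map_smul] at hf
  exact eq_sub_of_add_eq hf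

theorem ContinuousLinearMap.tendsto_norm_apply_of_opNorm_le {ι 𝕜 : Type*}
    [NontriviallyNormedField 𝕜] {E F : ι → Type*} [∀ i, SeminormedAddCommGroup (E i)]
    [∀ i, SeminormedAddCommGroup (F i)] [∀ i, NormedSpace 𝕜 (E i)] [∀ i, NormedSpace 𝕜 (F i)]
    {l : Filter ι} (L : ∀ i, E i →L[𝕜] F i) {C : ℝ} (hL : ∀ i, ‖L i‖ ≤ C) {v : ∀ i, E i}
    (hv : Tendsto (fun i => ‖v i‖) l (𝓝 0)) :
    Tendsto (fun i => ‖L i (v i)‖) l (𝓝 0) :=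
  squeeze_zero (fun _ => norm_nonneg _) (fun i => (L i).le_of_opNorm_le (hL i) _)
    (by simpa using hv.const_mul C)

theorem shifted_strongApprox_general
    (A : H →ₗ.[ℂ] H)
    (h0 : (0 : ℂ) ∈ presolventSet A)
    (U : ℕ → Submodule ℂ H)
    (P : ℕ → H →L[ℂ] H)
    (hPmem : ∀ n x, P n x ∈ U n)
    (hPconv : ∀ x : H, Tendsto (fun n => P n x) atTop (𝓝 x))
    (T : ∀ n, ↥(U n) →L[ℂ] ↥(U n)) (Tinv : ∀ n, ↥(U n) →L[ℂ] ↥(U n))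
    (hTinv : ∀ n, (∀ u, Tinv n (T n u) = u) ∧ ∀ u, T n (Tinv n u) = u)
    (happrox : ∀ x : H,
      Tendsto (fun n => (↑(Tinv n ⟨P n x, hPmem n x⟩) : H)) atTop
        (𝓝 (resolventOf A 0 x)))
    (lam : ℂ) (hlam : lam ∈ presolventSet A)
    (Rn : ∀ n, ↥(U n) →L[ℂ] ↥(U n))
    (hRn : ∀ n, (∀ u, Rn n (T n u - lam • u) = u) ∧
      ∀ u, T n (Rn n u) - lam • Rn n u = u)
    (hRb : ∃ C : ℝ, ∀ n, ‖Rn n‖ ≤ C) :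
    ∀ x : H,
      Tendsto (fun n => (↑(Rn n ⟨P n x, hPmem n x⟩) : H)) atTop
        (𝓝 (resolventOf A lam x)) := by
  intro x
  set y := resolventOf A lam x
  have hy : resolventOf A 0 (x + lam • y) = y := by
    simpa using (isResolventAt_resolventOf hlam).apply_add_smul (isResolventAt_resolventOf h0) x
  set u : ∀ n, U n := fun n => Tinv n ⟨P n (x + lam • y), hPmem n _⟩
  have hu : Tendsto (fun n => (u n : H)) atTop (𝓝 y) := hy ▸ happrox (x + lam • y)
  have hsplit : ∀ n, Rn n ⟨P n x, hPmem n x⟩ = u n - lam • Rn n (⟨P n y, hPmem n y⟩ - u n) :=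
    fun n => (Rn n : U n →ₗ[ℂ] U n).apply_eq_sub_smul_apply_sub ((hRn n).1 (u n)) <| by
      rw [(hTinv n).2]
      ext
      simp
  obtain ⟨C, hC⟩ := hRb
  have hsmall : Tendsto (fun n => (Rn n (⟨P n y, hPmem n y⟩ - u n) : H)) atTop (𝓝 0) := by
    refine tendsto_zero_iff_norm_tendsto_zero.2
      (ContinuousLinearMap.tendsto_norm_apply_of_opNorm_le Rn hC ?_)
    simpa using ((hPconv y).sub hu).norm
  simpa [hsplit] using hu.sub (hsmall.const_smul lam)

/-- Lemma 3.2. -/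
theorem shifted_strongApprox
    (A : H →ₗ.[ℂ] H)
    (hclosed : IsClosed (A.graph : Set (H × H)))
    (hdense : Dense (A.domain : Set H))
    (h0 : (0 : ℂ) ∈ presolventSet A)
    (U : ℕ → Submodule ℂ H) (hUfin : ∀ n, FiniteDimensional ℂ (U n))
    (P : ℕ → H →L[ℂ] H)
    (hPmem : ∀ n x, P n x ∈ U n)
    (hPproj : ∀ n, ∀ x ∈ U n, P n x = x)
    (hPconv : ∀ x : H, Tendsto (fun n => P n x) atTop (𝓝 x))
    (T : ∀ n, ↥(U n) →L[ℂ] ↥(U n)) (Tinv : ∀ n, ↥(U n) →L[ℂ] ↥(U n))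
    (hTinv : ∀ n, (∀ u, Tinv n (T n u) = u) ∧ ∀ u, T n (Tinv n u) = u)
    (happrox : ∀ x : H,
      Tendsto (fun n => (↑(Tinv n ⟨P n x, hPmem n x⟩) : H)) atTop
        (𝓝 (resolventOf A 0 x)))
    (lam : ℂ) (hlam : lam ∈ presolventSet A)
    (Rn : ∀ n, ↥(U n) →L[ℂ] ↥(U n))
    (hRn : ∀ n, (∀ u, Rn n (T n u - lam • u) = u) ∧
      ∀ u, T n (Rn n u) - lam • Rn n u = u)
    (hRb : ∃ C : ℝ, ∀ n, ‖Rn n‖ ≤ C) :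
    ∀ x : H,
      Tendsto (fun n => (↑(Rn n ⟨P n x, hPmem n x⟩) : H)) atTop
        (𝓝 (resolventOf A lam x)) :=
  shifted_strongApprox_general A h0 U P hPmem hPconv T Tinv hTinv happrox lam hlam Rn hRn hRb
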